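/- The set of seven 4-stars {1;3,5,6,8}, {2;1,3,6,8}, {4;1,2,3,8}, {5;2,3,4,7}, {6;3,4,5,7}, {7;1,2,3,4}, {8;3,5,6,7} forms a partition of the edge set of K_8 on vertex set {1,...,8} into 4-stars, and the partition of the vertices into {1,3,5,7} and {2,4,6,8} is a weak 2-colouring of this system (no 4-star has all five of its vertices in one class). -/
import Mathlib


structure EStar (n e : ℕ) where
  centre : Fin n
  leaves : Finset (Fin n)
  card_leaves : leaves.card = e
  centre_not_leaf : centre ∉ leaves

instance {n e : ℕ} : DecidableEq (EStar n e) := fun a b =>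
  decidable_of_iff (a.centre = b.centre ∧ a.leaves = b.leaves)
    (by cases a; cases b; simp)

/-- The edge set of an `e`-star: all edges joining the centre to a leaf. -/
def EStar.edges {n e : ℕ} (S : EStar n e) : Finset (Sym2 (Fin n)) :=
  S.leaves.image (fun a => s(S.centre, a))

/-- The vertex set of an `e`-star. -/
def EStar.verts {n e : ℕ} (S : EStar n e) : Finset (Fin n) :=
  insert S.centre S.leaves

/-- An `e`-star system of order `n`: a collection of `e`-stars whose edge sets
partition the edge set of the complete graph `K_n`. -/
structure EStarSystem (n e : ℕ) where
  stars : Finset (EStar n e)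
  partition : ∀ p : Sym2 (Fin n), ¬ p.IsDiag →
    ∃! S, S ∈ stars ∧ p ∈ EStar.edges S

/-- A weak colouring: no star of the system has all of its vertices one colour. -/
def IsWeakColouring {n e k : ℕ} (sys : EStarSystem n e) (c : Fin n → Fin k) : Prop :=
  ∀ S ∈ sys.stars, ∃ a ∈ S.leaves, c a ≠ c S.centre

def Colourable {n e : ℕ} (sys : EStarSystem n e) (k : ℕ) : Prop :=
  ∃ c : Fin n → Fin k, IsWeakColouring sys c

def Chromatic {n e : ℕ} (sys : EStarSystem n e) (k : ℕ) : Prop :=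
  Colourable sys k ∧ ¬ Colourable sys (k - 1)

/-- The size of the colour class of colour `i`. -/
def classCard {n k : ℕ} (c : Fin n → Fin k) (i : Fin k) : ℕ :=
  (Finset.univ.filter (fun v => c v = i)).card

def UniquelyColourable {n e : ℕ} (sys : EStarSystem n e) (k : ℕ) : Prop :=
  ∀ c₁ c₂ : Fin n → Fin k, IsWeakColouring sys c₁ → IsWeakColouring sys c₂ →
    ∃ π : Equiv.Perm (Fin k), c₂ = π ∘ c₁

/-- The seven 4-stars (vertices relabelled `1,…,8 ↦ 0,…,7`):
`{1;3,5,6,8}, {2;1,3,6,8}, {4;1,2,3,8}, {5;2,3,4,7}, {6;3,4,5,7}, {7;1,2,3,4},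
{8;3,5,6,7}`. -/
def B10 : Finset (EStar 8 4) :=
  { ⟨0, {2, 4, 5, 7}, by decide, by decide⟩,
    ⟨1, {0, 2, 5, 7}, by decide, by decide⟩,
    ⟨3, {0, 1, 2, 7}, by decide, by decide⟩,
    ⟨4, {1, 2, 3, 6}, by decide, by decide⟩,
    ⟨5, {2, 3, 4, 6}, by decide, by decide⟩,
    ⟨6, {0, 1, 2, 3}, by decide, by decide⟩,
    ⟨7, {2, 4, 5, 6}, by decide, by decide⟩ }

/-- The colouring with classes `{1,3,5,7}` and `{2,4,6,8}`
(relabelled `{0,2,4,6}` and `{1,3,5,7}`). -/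
def c10 : Fin 8 → Fin 2 := fun v => ⟨v.val % 2, by omega⟩

/-- The listed seven 4-stars partition the edge set of `K₈` into 4-stars, and the
parity partition is a weak 2-colouring of this system. -/
theorem stmt10 :
    (∀ p : Sym2 (Fin 8), ¬ p.IsDiag → ∃! S, S ∈ B10 ∧ p ∈ EStar.edges S) ∧
    (∀ S ∈ B10, ∃ a ∈ S.leaves, c10 a ≠ c10 S.centre) := by
  constructor
  · intro p hp
    have h : (B10.filter (fun S => p ∈ EStar.edges S)).card = 1 := by
      revert hp; revert p; decide
    obtain ⟨S, hS⟩ := Finset.card_eq_one.mp h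
    have hSmem := Finset.mem_filter.mp (hS ▸ Finset.mem_singleton_self S)
    refine ⟨S, ⟨hSmem.1, hSmem.2⟩, ?_⟩
    intro y hy
    have hy' : y ∈ B10.filter (fun S => p ∈ EStar.edges S) :=
      Finset.mem_filter.mpr hy
    rw [hS] at hy'
    exact Finset.mem_singleton.mp hy'
  · decide
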